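/- arXiv:1201.4375 — 4 statements merged into one kernel-verified Lean document; each statement's English description precedes it below -/
import Mathlib

section
/- For every integer ℓ ≥ 1, SP(2ℓ+1, 2) = C(2ℓ, ℓ-1); that is, the maximum number of partitions in a Sperner 2-partition system on a (2ℓ+1)-element set is the binomial coefficient (2ℓ choose ℓ-1). -/
open Finset

/-- `P` is a partition of the finite set `X` into exactly `k` nonempty classes. -/
def IsPartitionInto {α : Type*} [DecidableEq α] (X : Finset α) (k : ℕ)
    (P : Finset (Finset α)) : Prop :=
  P.card = k ∧ (∀ A ∈ P, A.Nonempty) ∧ (∀ A ∈ P, A ⊆ X) ∧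
    ∀ x ∈ X, ∃! A, A ∈ P ∧ x ∈ A

/-- `Sys` is a Sperner `k`-partition system on the finite set `X`: every member is a
`k`-partition of `X` and no class of one partition is contained in a class of a
different partition of the system. -/
def IsSpernerPartitionSystem {α : Type*} [DecidableEq α] (X : Finset α) (k : ℕ)
    (Sys : Finset (Finset (Finset α))) : Prop :=
  (∀ P ∈ Sys, IsPartitionInto X k P) ∧
    ∀ P ∈ Sys, ∀ Q ∈ Sys, P ≠ Q → ∀ A ∈ P, ∀ B ∈ Q, ¬ A ⊆ B

/-- `SP n k` is the maximum number of partitions in a Sperner `k`-partition system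
on an `n`-element set. -/
noncomputable def SP (n k : ℕ) : ℕ :=
  sSup {m | ∃ Sys : Finset (Finset (Finset (Fin n))),
    IsSpernerPartitionSystem Finset.univ k Sys ∧ Sys.card = m}

/-!
Every 2-partition of a `(2ℓ+1)`-set is `{A, Aᶜ}` with exactly one class of size at most `ℓ`.
Choosing that class in each partition of a Sperner system gives, injectively, an antichain of
sets of size at most `ℓ`, and it is intersecting because `A ∩ B = ∅` would put `A` inside the
class `Bᶜ` of another partition. Replacing the smallest sets of such a family by their upper
shadow keeps it an intersecting antichain and, by the local LYM inequality below the middle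
level, does not shrink it; repeating this lifts the family to level `ℓ`, where Erdős–Ko–Rado
bounds it by `C(2ℓ, ℓ-1)`. The star of `ℓ`-sets through a point, each paired with its
complement, attains the bound.
-/

open FinsetFamily

variable {α : Type*} [DecidableEq α]

section TwoPartitions
variable [Fintype α]

theorem IsPartitionInto.exists_eq_pair_compl {P : Finset (Finset α)}
    (h : IsPartitionInto univ 2 P) : ∃ A, P = {A, Aᶜ} := by
  obtain ⟨hcard, -, -, huniq⟩ := h
  obtain ⟨A, B, hAB, rfl⟩ := card_eq_two.1 hcard
  refine ⟨A, ?_⟩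
  suffices B = Aᶜ by rw [this]
  ext x
  obtain ⟨C, ⟨hC, hxC⟩, huniqx⟩ := huniq x (mem_univ x)
  have hA : x ∈ A → A = C := fun hx => huniqx A ⟨by simp, hx⟩
  have hB : x ∈ B → B = C := fun hx => huniqx B ⟨by simp, hx⟩
  simp only [mem_insert, mem_singleton] at hC
  rw [mem_compl]
  grind

theorem isPartitionInto_pair_compl {A : Finset α} (hA : A.Nonempty) (hAc : Aᶜ.Nonempty) :
    IsPartitionInto univ 2 {A, Aᶜ} := by
  have hne : A ≠ Aᶜ := fun h => by
    obtain ⟨x, hx⟩ := hA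
    exact mem_compl.1 (h ▸ hx) hx
  refine ⟨card_pair hne, by simp [hA, hAc], fun C _ => subset_univ C, fun x _ => ?_⟩
  by_cases hx : x ∈ A
  · exact ⟨A, by simp [hx], by aesop⟩
  · exact ⟨Aᶜ, by simp [hx], by aesop⟩

theorem IsPartitionInto.exists_card_le {ℓ : ℕ} (hα : Fintype.card α = 2 * ℓ + 1)
    {P : Finset (Finset α)} (h : IsPartitionInto univ 2 P) :
    ∃ C ∈ P, Cᶜ ∈ P ∧ #C ≤ ℓ := by
  obtain ⟨A, rfl⟩ := h.exists_eq_pair_compl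
  have hsum : #A + #Aᶜ = 2 * ℓ + 1 := by rw [card_add_card_compl, hα]
  by_cases hA : #A ≤ ℓ
  · exact ⟨A, by simp, by simp, hA⟩
  · exact ⟨Aᶜ, by simp, by simp, by omega⟩

end TwoPartitions

namespace IsSpernerPartitionSystem

variable {X : Finset α} {k : ℕ} {Sys : Finset (Finset (Finset α))}
  {f : Finset (Finset α) → Finset α}

theorem injOn (h : IsSpernerPartitionSystem X k Sys) (hf : ∀ P ∈ Sys, f P ∈ P) :
    Set.InjOn f Sys := fun P hP Q hQ hPQ => by
  by_contra hne
  exact h.2 P hP Q hQ hne _ (hf P hP) _ (hf Q hQ) hPQ.le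

theorem isAntichain_image (h : IsSpernerPartitionSystem X k Sys) (hf : ∀ P ∈ Sys, f P ∈ P) :
    IsAntichain (· ⊆ ·) (Sys.image f : Set (Finset α)) := by
  rintro _ hA _ hB hne hAB
  obtain ⟨P, hP, rfl⟩ := mem_image.1 hA
  obtain ⟨Q, hQ, rfl⟩ := mem_image.1 hB
  exact h.2 P hP Q hQ (by rintro rfl; exact hne rfl) _ (hf P hP) _ (hf Q hQ) hAB

theorem intersecting_image [Fintype α] (h : IsSpernerPartitionSystem univ k Sys)
    (hf : ∀ P ∈ Sys, f P ∈ P ∧ (f P)ᶜ ∈ P) :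
    (Sys.image f : Set (Finset α)).Intersecting := by
  rintro _ hA _ hB hdisj
  obtain ⟨P, hP, rfl⟩ := mem_image.1 hA
  obtain ⟨Q, hQ, rfl⟩ := mem_image.1 hB
  by_cases hPQ : P = Q
  · subst hPQ
    exact ((h.1 P hP).2.1 _ (hf P hP).1).ne_empty (disjoint_self.1 hdisj)
  · exact h.2 P hP Q hQ hPQ _ (hf P hP).1 _ (hf Q hQ).2 (subset_compl_iff_disjoint_right.2 hdisj)

end IsSpernerPartitionSystem

theorem Set.Intersecting.of_forall_exists_subset {𝒜 ℬ : Finset (Finset α)}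
    (h𝒜 : (𝒜 : Set (Finset α)).Intersecting) (hℬ : ∀ B ∈ ℬ, ∃ A ∈ 𝒜, A ⊆ B) :
    (ℬ : Set (Finset α)).Intersecting := by
  intro B hB C hC hBC
  obtain ⟨A, hA, hAB⟩ := hℬ B hB
  obtain ⟨A', hA', hAC⟩ := hℬ C hC
  exact h𝒜 hA hA' (hBC.mono hAB hAC)

section RaiseSlice
variable [Fintype α] {𝒜 : Finset (Finset α)} {a : ℕ}

theorem card_le_card_upShadow (h𝒜 : (𝒜 : Set (Finset α)).Sized a)
    (ha : 2 * a < Fintype.card α) : #𝒜 ≤ #(∂⁺ 𝒜) := by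
  have hlym := card_mul_le_card_shadow_mul h𝒜.compls
  rw [shadow_compls, card_compls, card_compls,
    Nat.sub_sub_self (by omega : a ≤ Fintype.card α)] at hlym
  exact Nat.le_of_mul_le_mul_right
    (hlym.trans (Nat.mul_le_mul_left _ (by omega : a + 1 ≤ Fintype.card α - a))) (by omega)

def raiseSlice (a : ℕ) (𝒜 : Finset (Finset α)) : Finset (Finset α) :=
  {A ∈ 𝒜 | #A ≠ a} ∪ ∂⁺ (𝒜 # a)

theorem of_mem_raiseSlice {B : Finset α} (hB : B ∈ raiseSlice a 𝒜) :
    (B ∈ 𝒜 ∧ #B ≠ a) ∨ (#B = a + 1 ∧ ∃ A ∈ 𝒜, #A = a ∧ A ⊆ B) := by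
  rw [raiseSlice, mem_union, mem_filter] at hB
  refine hB.imp_right fun hB => ⟨sized_slice.upShadow hB, ?_⟩
  obtain ⟨A, hA, hAB⟩ := exists_subset_of_mem_upShadow hB
  exact ⟨A, slice_subset hA, (mem_slice.1 hA).2, hAB⟩

theorem intersecting_raiseSlice (h𝒜 : (𝒜 : Set (Finset α)).Intersecting) :
    (raiseSlice a 𝒜 : Set (Finset α)).Intersecting := by
  refine h𝒜.of_forall_exists_subset fun B hB => ?_
  rcases of_mem_raiseSlice hB with ⟨hB, -⟩ | ⟨-, A, hA, -, hAB⟩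
  exacts [⟨B, hB, subset_rfl⟩, ⟨A, hA, hAB⟩]

theorem isAntichain_raiseSlice (h𝒜 : IsAntichain (· ⊆ ·) (𝒜 : Set (Finset α)))
    (ha : ∀ A ∈ 𝒜, a ≤ #A) :
    IsAntichain (· ⊆ ·) (raiseSlice a 𝒜 : Set (Finset α)) := by
  intro B hB C hC hne hBC
  have hcard := card_le_card hBC
  rcases of_mem_raiseSlice hB with ⟨hB, hBa⟩ | ⟨hBa, A, hA, hAa, hAB⟩ <;>
    rcases of_mem_raiseSlice hC with ⟨hC, hCa⟩ | ⟨hCa, -⟩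
  · exact h𝒜 hB hC hne hBC
  · have := ha B hB
    exact hne (eq_of_subset_of_card_le hBC (by omega))
  · exact h𝒜 hA hC (by rintro rfl; exact hCa hAa) (hAB.trans hBC)
  · exact hne (eq_of_subset_of_card_le hBC (by omega))

theorem card_le_card_raiseSlice (h𝒜 : IsAntichain (· ⊆ ·) (𝒜 : Set (Finset α)))
    (ha : 2 * a < Fintype.card α) : #𝒜 ≤ #(raiseSlice a 𝒜) := by
  have hdisj : Disjoint {A ∈ 𝒜 | #A ≠ a} (∂⁺ (𝒜 # a)) := by
    refine disjoint_left.2 fun B hB hB' => ?_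
    obtain ⟨hB, hBa⟩ := mem_filter.1 hB
    obtain ⟨A, hA, hAB⟩ := exists_subset_of_mem_upShadow hB'
    obtain ⟨hA, hAa⟩ := mem_slice.1 hA
    exact h𝒜 hA hB (by rintro rfl; exact hBa hAa) hAB
  calc #𝒜 = #{A ∈ 𝒜 | #A ≠ a} + #(𝒜 # a) := by
        rw [slice, add_comm, card_filter_add_card_filter_not]
    _ ≤ #{A ∈ 𝒜 | #A ≠ a} + #(∂⁺ (𝒜 # a)) :=
        Nat.add_le_add_left (card_le_card_upShadow sized_slice ha) _
    _ = #(raiseSlice a 𝒜) := (card_union_of_disjoint hdisj).symm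

end RaiseSlice

theorem exists_sized_intersecting_card_le [Fintype α] {r : ℕ} (hr : 2 * r ≤ Fintype.card α)
    (k : ℕ) {𝒜 : Finset (Finset α)} (h𝒜 : (𝒜 : Set (Finset α)).Intersecting)
    (hanti : IsAntichain (· ⊆ ·) (𝒜 : Set (Finset α)))
    (hsize : ∀ A ∈ 𝒜, #A ≤ r ∧ r ≤ #A + k) :
    ∃ ℬ : Finset (Finset α), (ℬ : Set (Finset α)).Intersecting ∧
      (ℬ : Set (Finset α)).Sized r ∧ #𝒜 ≤ #ℬ := by
  induction k generalizing 𝒜 with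
  | zero => exact ⟨𝒜, h𝒜, fun A hA => by have := hsize A hA; omega, le_rfl⟩
  | succ k ih =>
    by_cases hk : r ≤ k
    · exact ih h𝒜 hanti fun A hA => ⟨(hsize A hA).1, by omega⟩
    set a := r - (k + 1)
    have ha : ∀ A ∈ 𝒜, a ≤ #A := fun A hA => by have := hsize A hA; omega
    obtain ⟨ℬ, hℬ, hℬr, hcard⟩ := ih (intersecting_raiseSlice h𝒜) (isAntichain_raiseSlice hanti ha)
      fun B hB => by
        rcases of_mem_raiseSlice hB with ⟨hB, hBa⟩ | ⟨hBa, -⟩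
        · have := hsize B hB; omega
        · omega
    exact ⟨ℬ, hℬ, hℬr, (card_le_card_raiseSlice hanti (by omega)).trans hcard⟩

theorem card_le_choose_of_intersecting_of_isAntichain {n r : ℕ} {𝒜 : Finset (Finset (Fin n))}
    (h𝒜 : (𝒜 : Set (Finset (Fin n))).Intersecting)
    (hanti : IsAntichain (· ⊆ ·) (𝒜 : Set (Finset (Fin n))))
    (hr : ∀ A ∈ 𝒜, #A ≤ r) (hn : 2 * r ≤ n) : #𝒜 ≤ (n - 1).choose (r - 1) := by
  obtain ⟨ℬ, hℬ, hℬr, hcard⟩ := exists_sized_intersecting_card_le (by simpa using hn) r h𝒜 hanti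
    fun A hA => ⟨hr A hA, by omega⟩
  exact hcard.trans (erdos_ko_rado hℬ hℬr (by omega))

theorem IsSpernerPartitionSystem.card_le_choose {ℓ : ℕ}
    {Sys : Finset (Finset (Finset (Fin (2 * ℓ + 1))))}
    (h : IsSpernerPartitionSystem univ 2 Sys) : #Sys ≤ (2 * ℓ).choose (ℓ - 1) := by
  choose! f hf using fun P hP => (h.1 P hP).exists_card_le (Fintype.card_fin _)
  have hmem : ∀ P ∈ Sys, f P ∈ P := fun P hP => (hf P hP).1
  calc #Sys = #(Sys.image f) := (card_image_of_injOn (h.injOn hmem)).symm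
    _ ≤ (2 * ℓ).choose (ℓ - 1) :=
      card_le_choose_of_intersecting_of_isAntichain
        (h.intersecting_image fun P hP => ⟨(hf P hP).1, (hf P hP).2.1⟩)
        (h.isAntichain_image hmem) (by simpa using fun P hP => (hf P hP).2.2) (by omega)

section Construction
variable [Fintype α] {𝒜 : Finset (Finset α)}

theorem isSpernerPartitionSystem_image_pair_compl {ℓ : ℕ} (hα : Fintype.card α = 2 * ℓ + 1)
    (h𝒜 : (𝒜 : Set (Finset α)).Intersecting) (hℓ : (𝒜 : Set (Finset α)).Sized ℓ) :
    IsSpernerPartitionSystem univ 2 (𝒜.image fun A => {A, Aᶜ}) := by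
  have hcompl : ∀ A ∈ 𝒜, #Aᶜ = ℓ + 1 := fun A hA => by rw [card_compl, hα, hℓ hA]; omega
  refine ⟨?_, ?_⟩
  · simp only [mem_image, forall_exists_index, and_imp, forall_apply_eq_imp_iff₂]
    intro A hA
    exact isPartitionInto_pair_compl (nonempty_iff_ne_empty.2 (h𝒜.ne_bot hA))
      (card_pos.1 (by rw [hcompl A hA]; omega))
  simp only [mem_image, forall_exists_index, and_imp, forall_apply_eq_imp_iff₂]
  intro A hA B hB hAB C hC D hD hCD
  have hne : A ≠ B := by rintro rfl; exact hAB rfl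
  simp only [mem_insert, mem_singleton] at hC hD
  have hcard := card_le_card hCD
  rcases hC with rfl | rfl <;> rcases hD with rfl | rfl
  · exact hne (eq_of_subset_of_card_le hCD (by rw [hℓ hA, hℓ hB]))
  · exact h𝒜 hA hB (subset_compl_iff_disjoint_right.1 hCD)
  · have := hcompl _ hA; have := hℓ hB; omega
  · exact hne (eq_of_subset_of_card_le (compl_subset_compl.1 hCD) (by rw [hℓ hA, hℓ hB])).symm

theorem card_image_pair_compl (h𝒜 : (𝒜 : Set (Finset α)).Intersecting) :
    #(𝒜.image fun A => ({A, Aᶜ} : Finset (Finset α))) = #𝒜 := by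
  refine card_image_of_injOn fun A hA B hB hAB => ?_
  have hA' : A ∈ ({B, Bᶜ} : Finset (Finset α)) := hAB ▸ mem_insert_self A {Aᶜ}
  rcases mem_insert.1 hA' with h | h
  · exact h
  · exact absurd hA (mem_singleton.1 h ▸ h𝒜.compl_notMem hB)

theorem card_image_insert_powersetCard (x : α) (r : ℕ) :
    #((powersetCard r (univ.erase x)).image (insert x)) = (Fintype.card α - 1).choose r := by
  rw [card_image_of_injOn, card_powersetCard, card_erase_of_mem (mem_univ x), card_univ]
  intro B hB C hC hBC
  have hxB : x ∉ B := fun hx => (mem_erase.1 ((mem_powersetCard.1 hB).1 hx)).1 rfl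
  have hxC : x ∉ C := fun hx => (mem_erase.1 ((mem_powersetCard.1 hC).1 hx)).1 rfl
  rw [← erase_insert hxB, ← erase_insert hxC]
  exact congrArg (·.erase x) hBC

end Construction

theorem exists_isSpernerPartitionSystem_card_eq [Fintype α] {ℓ : ℕ}
    (hα : Fintype.card α = 2 * ℓ + 1) (hℓ : 1 ≤ ℓ) (x : α) :
    ∃ Sys : Finset (Finset (Finset α)),
      IsSpernerPartitionSystem univ 2 Sys ∧ #Sys = (2 * ℓ).choose (ℓ - 1) := by
  set star := (powersetCard (ℓ - 1) (univ.erase x)).image (insert x)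
  have hstar : (star : Set (Finset α)).Intersecting := by
    simp only [star, coe_image]
    rintro _ ⟨B, -, rfl⟩ _ ⟨C, -, rfl⟩ hBC
    exact disjoint_left.1 hBC (mem_insert_self x B) (mem_insert_self x C)
  have hsized : (star : Set (Finset α)).Sized ℓ := by
    simp only [star, coe_image]
    rintro _ ⟨B, hB, rfl⟩
    obtain ⟨hBx, hcard⟩ := mem_powersetCard.1 hB
    rw [card_insert_of_notMem fun hx => (mem_erase.1 (hBx hx)).1 rfl, hcard]
    omega
  refine ⟨_, isSpernerPartitionSystem_image_pair_compl hα hstar hsized, ?_⟩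
  rw [card_image_pair_compl hstar, card_image_insert_powersetCard, hα, Nat.add_sub_cancel]

theorem SP_two_odd (ℓ : ℕ) (hℓ : 1 ≤ ℓ) :
    SP (2 * ℓ + 1) 2 = Nat.choose (2 * ℓ) (ℓ - 1) := by
  refine IsGreatest.csSup_eq ⟨?_, ?_⟩
  · exact exists_isSpernerPartitionSystem_card_eq (Fintype.card_fin _) hℓ 0
  · rintro m ⟨Sys, hSys, rfl⟩
    exact hSys.card_le_choose
end

section
/- For every integer k ≥ 1, SP(2k+1, k) ≤ 2k; that is, every Sperner k-partition system on a (2k+1)-element set has at most 2k partitions. -/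
open Finset

/-!
Suppose a Sperner system on a `(2k+1)`-set has `s ≥ 2k+1` partitions. A singleton class would
lie inside a class of any other partition, so every partition consists of one triple and `k-1`
pairs. Fix a point `x` and remove it from its class in each partition: by the Sperner property
this gives an antichain of `s` singletons and pairs on the other `2k` points. If `m_x` of them
are pairs, covering `c` points, the singletons avoid these points, so `s - m_x + c ≤ 2k`, while
`m_x ≤ c(c-1)/2`; together this forces `c ≥ 4`, hence `s + 4 ≤ m_x + 2k`. Summing over `x`
with `∑ m_x = 3s` gives `(2k+1)(s+4) ≤ 3s + 2k(2k+1)`, impossible for `s ≥ 2k+1`.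
-/

variable {α : Type*} [DecidableEq α]

section SetFamily

theorem card_le_choose_card_sup_of_sized {𝒜 : Finset (Finset α)} {r : ℕ}
    (h𝒜 : (𝒜 : Set (Finset α)).Sized r) : #𝒜 ≤ (#(𝒜.sup id)).choose r := by
  rw [← card_powersetCard]
  refine card_le_card fun B hB => mem_powersetCard.2 ⟨?_, h𝒜 hB⟩
  exact le_sup (f := id) hB

theorem card_slice_one_add_card_sup_slice_two_le {𝒜 : Finset (Finset α)} {Y : Finset α}
    (h𝒜 : IsAntichain (· ⊆ ·) (𝒜 : Set (Finset α))) (hY : ∀ B ∈ 𝒜, B ⊆ Y) :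
    #(𝒜.slice 1) + #((𝒜.slice 2).sup id) ≤ #Y := by
  set C := (𝒜.slice 2).sup id
  have hCY : C ⊆ Y := Finset.sup_le fun B hB => hY B (slice_subset hB)
  have hsingle : 𝒜.slice 1 ⊆ (Y \ C).powersetCard 1 := by
    intro B hB
    obtain ⟨hB𝒜, hB1⟩ := mem_slice.1 hB
    obtain ⟨y, rfl⟩ := card_eq_one.1 hB1
    refine mem_powersetCard.2
      ⟨singleton_subset_iff.2 (mem_sdiff.2 ⟨hY _ hB𝒜 (mem_singleton_self y), ?_⟩), hB1⟩
    intro hyC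
    obtain ⟨B', hB', hyB'⟩ := mem_sup.1 hyC
    obtain ⟨hB'𝒜, hB'2⟩ := mem_slice.1 hB'
    refine h𝒜 hB𝒜 hB'𝒜 (fun h => ?_) (singleton_subset_iff.2 hyB')
    rw [← h, card_singleton] at hB'2
    exact absurd hB'2 (by decide)
  have := card_le_card hsingle
  rw [card_powersetCard, Nat.choose_one_right, card_sdiff_of_subset hCY] at this
  have := card_le_card hCY
  omega

theorem card_add_four_le_card_slice_two_add {𝒜 : Finset (Finset α)} {Y : Finset α}
    (h𝒜 : IsAntichain (· ⊆ ·) (𝒜 : Set (Finset α))) (hY : ∀ B ∈ 𝒜, B ⊆ Y)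
    (hsize : ∀ B ∈ 𝒜, #B = 1 ∨ #B = 2) (hbig : #Y < #𝒜) :
    #𝒜 + 4 ≤ #(𝒜.slice 2) + #Y := by
  have hsplit : #(𝒜.slice 1) + #(𝒜.slice 2) = #𝒜 := by
    rw [← card_filter_add_card_filter_not (s := 𝒜) (fun B => #B = 1)]
    congr 2
    exact filter_congr fun B hB => by rcases hsize B hB with h | h <;> simp [h]
  have hpairs := card_le_choose_card_sup_of_sized (sized_slice (𝒜 := 𝒜) (r := 2))
  have hspread := card_slice_one_add_card_sup_slice_two_le h𝒜 hY
  set c := #((𝒜.slice 2).sup id)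
  have hc : 4 ≤ c := by
    by_contra! hc
    have : c.choose 2 ≤ c := by interval_cases c <;> decide
    omega
  omega

end SetFamily

/-- The union of the classes of `P` containing `x`: the class of `x` if `P` is a partition. -/
def classOf (P : Finset (Finset α)) (x : α) : Finset α := (P.filter (x ∈ ·)).sup id

namespace IsPartitionInto

variable {X : Finset α} {k : ℕ} {P : Finset (Finset α)} {A : Finset α} {x : α}

def toFinpartition (hP : IsPartitionInto X k P) : Finpartition X :=
  Finpartition.ofExistsUnique P hP.2.2.1 hP.2.2.2 fun h => (hP.2.1 ∅ h).ne_empty rfl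

theorem sum_card (hP : IsPartitionInto X k P) : ∑ A ∈ P, #A = #X :=
  hP.toFinpartition.sum_card_parts

theorem classOf_eq (hP : IsPartitionInto X k P) (hA : A ∈ P) (hxA : x ∈ A) :
    classOf P x = A := by
  have hfilter : P.filter (x ∈ ·) = {A} := by
    refine eq_singleton_iff_unique_mem.2 ⟨mem_filter.2 ⟨hA, hxA⟩, fun B hB => ?_⟩
    obtain ⟨hBP, hxB⟩ := mem_filter.1 hB
    exact (hP.2.2.2 x (hP.2.2.1 A hA hxA)).unique ⟨hBP, hxB⟩ ⟨hA, hxA⟩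
  rw [classOf, hfilter, sup_singleton, id]

theorem classOf_mem (hP : IsPartitionInto X k P) (hx : x ∈ X) : classOf P x ∈ P := by
  obtain ⟨A, ⟨hA, hxA⟩, -⟩ := hP.2.2.2 x hx
  rwa [hP.classOf_eq hA hxA]

theorem mem_classOf (hP : IsPartitionInto X k P) (hx : x ∈ X) : x ∈ classOf P x := by
  obtain ⟨A, ⟨hA, hxA⟩, -⟩ := hP.2.2.2 x hx
  rwa [hP.classOf_eq hA hxA]

theorem classOf_subset (hP : IsPartitionInto X k P) (hx : x ∈ X) : classOf P x ⊆ X :=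
  hP.2.2.1 _ (hP.classOf_mem hx)

theorem exists_card_three (hP : IsPartitionInto X k P) (hX : #X = 2 * k + 1)
    (htwo : ∀ A ∈ P, 2 ≤ #A) : ∃ T ∈ P, #T = 3 ∧ ∀ A ∈ P, A ≠ T → #A = 2 := by
  have hexcess : ∑ A ∈ P, (#A - 2) = 1 := by
    have hsum : ∑ A ∈ P, #A = ∑ A ∈ P, ((#A - 2) + 2) :=
      sum_congr rfl fun A hA => by have := htwo A hA; omega
    rw [hP.sum_card, sum_add_distrib, sum_const, hP.1, smul_eq_mul] at hsum
    omega
  obtain ⟨T, hT, hT0⟩ := exists_ne_zero_of_sum_ne_zero (hexcess.trans_ne one_ne_zero)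
  rw [← add_sum_erase P _ hT] at hexcess
  have hrest := sum_eq_zero_iff.1 (show ∑ A ∈ P.erase T, (#A - 2) = 0 by omega)
  refine ⟨T, hT, by have := htwo T hT; omega, fun A hA hAT => ?_⟩
  have := hrest A (mem_erase.2 ⟨hAT, hA⟩)
  have := htwo A hA
  omega

end IsPartitionInto

namespace IsSpernerPartitionSystem

variable {X : Finset α} {k : ℕ} {Sys : Finset (Finset (Finset α))}

theorem two_le_card (hS : IsSpernerPartitionSystem X k Sys) (hSys : 1 < #Sys)
    {P : Finset (Finset α)} (hP : P ∈ Sys) {A : Finset α} (hA : A ∈ P) : 2 ≤ #A := by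
  obtain ⟨y, hy⟩ := (hS.1 P hP).2.1 A hA
  by_contra! hlt
  obtain rfl : A = {y} := eq_singleton_iff_unique_mem.2
    ⟨hy, fun z hz => card_le_one.1 (by omega) z hz y hy⟩
  obtain ⟨Q, hQ, hQP⟩ := exists_mem_ne hSys P
  have hy : y ∈ X := (hS.1 P hP).2.2.1 _ hA (mem_singleton_self y)
  exact hS.2 P hP Q hQ hQP.symm _ hA _ ((hS.1 Q hQ).classOf_mem hy)
    (singleton_subset_iff.2 ((hS.1 Q hQ).mem_classOf hy))

theorem eq_of_erase_classOf_subset (hS : IsSpernerPartitionSystem X k Sys) {x : α} (hx : x ∈ X)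
    {P Q : Finset (Finset α)} (hP : P ∈ Sys) (hQ : Q ∈ Sys)
    (hPQ : (classOf P x).erase x ⊆ (classOf Q x).erase x) : P = Q := by
  by_contra hne
  refine hS.2 P hP Q hQ hne _ ((hS.1 P hP).classOf_mem hx) _ ((hS.1 Q hQ).classOf_mem hx) ?_
  rw [← insert_erase ((hS.1 P hP).mem_classOf hx), ← insert_erase ((hS.1 Q hQ).mem_classOf hx)]
  exact insert_subset_insert x hPQ

theorem exists_card_three (hS : IsSpernerPartitionSystem X k Sys) (hX : #X = 2 * k + 1)
    (hSys : 1 < #Sys) {P : Finset (Finset α)} (hP : P ∈ Sys) :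
    ∃ T ∈ P, #T = 3 ∧ ∀ A ∈ P, A ≠ T → #A = 2 :=
  (hS.1 P hP).exists_card_three hX fun _ hA => hS.two_le_card hSys hP hA

theorem card_classOf_eq_two_or_three (hS : IsSpernerPartitionSystem X k Sys)
    (hX : #X = 2 * k + 1) (hSys : 1 < #Sys) {P : Finset (Finset α)} (hP : P ∈ Sys) {x : α}
    (hx : x ∈ X) : #(classOf P x) = 2 ∨ #(classOf P x) = 3 := by
  obtain ⟨T, -, hT3, hrest⟩ := hS.exists_card_three hX hSys hP
  by_cases hxT : classOf P x = T
  · exact .inr (hxT ▸ hT3)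
  · exact .inl (hrest _ ((hS.1 P hP).classOf_mem hx) hxT)

theorem card_filter_card_classOf_eq_three (hS : IsSpernerPartitionSystem X k Sys)
    (hX : #X = 2 * k + 1) (hSys : 1 < #Sys) {P : Finset (Finset α)} (hP : P ∈ Sys) :
    #(X.filter fun x => #(classOf P x) = 3) = 3 := by
  obtain ⟨T, hT, hT3, hrest⟩ := hS.exists_card_three hX hSys hP
  suffices X.filter (fun x => #(classOf P x) = 3) = T by rw [this, hT3]
  ext y
  rw [mem_filter]
  constructor
  · rintro ⟨hy, hy3⟩
    by_contra hyT
    have := hrest _ ((hS.1 P hP).classOf_mem hy) fun h => hyT (h ▸ (hS.1 P hP).mem_classOf hy)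
    omega
  · intro hyT
    exact ⟨(hS.1 P hP).2.2.1 T hT hyT, by rw [(hS.1 P hP).classOf_eq hT hyT, hT3]⟩

theorem isAntichain_image_erase_classOf (hS : IsSpernerPartitionSystem X k Sys) {x : α}
    (hx : x ∈ X) :
    IsAntichain (· ⊆ ·) (Sys.image fun P => (classOf P x).erase x : Set (Finset α)) := by
  rintro _ hB _ hB' hne hsub
  simp only [coe_image, Set.mem_image, mem_coe] at hB hB'
  obtain ⟨P, hP, rfl⟩ := hB
  obtain ⟨Q, hQ, rfl⟩ := hB'
  exact hne (by rw [hS.eq_of_erase_classOf_subset hx hP hQ hsub])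

theorem card_add_four_le_card_filter_classOf (hS : IsSpernerPartitionSystem X k Sys)
    (hX : #X = 2 * k + 1) (hk : 1 ≤ k) (hbig : 2 * k < #Sys) {x : α} (hx : x ∈ X) :
    #Sys + 4 ≤ #(Sys.filter fun P => #(classOf P x) = 3) + 2 * k := by
  have hSys : 1 < #Sys := by omega
  set link := fun P : Finset (Finset α) => (classOf P x).erase x
  have hinj : Set.InjOn link Sys := fun P hP Q hQ h =>
    hS.eq_of_erase_classOf_subset hx hP hQ h.le
  have hcard_link : ∀ P ∈ Sys, #(link P) + 1 = #(classOf P x) := fun P hP =>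
    card_erase_add_one ((hS.1 P hP).mem_classOf hx)
  have hlink := card_add_four_le_card_slice_two_add (hS.isAntichain_image_erase_classOf hx)
    (Y := X.erase x)
    (forall_mem_image.2 fun P hP => erase_subset_erase x ((hS.1 P hP).classOf_subset hx))
    (forall_mem_image.2 fun P hP => by
      change #(link P) = 1 ∨ #(link P) = 2
      have := hcard_link P hP
      have := hS.card_classOf_eq_two_or_three hX hSys hP hx
      omega)
    (by rw [card_image_of_injOn hinj, card_erase_of_mem hx]; omega)
  have hslice :
      (Sys.image link).slice 2 = (Sys.filter fun P => #(classOf P x) = 3).image link := by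
    rw [slice, filter_image]
    exact congrArg _ (filter_congr fun P hP => by have := hcard_link P hP; omega)
  rw [hslice, card_image_of_injOn hinj, card_image_of_injOn (hinj.mono (filter_subset _ _)),
    card_erase_of_mem hx, hX] at hlink
  omega

theorem card_le (hS : IsSpernerPartitionSystem X k Sys) (hX : #X = 2 * k + 1) (hk : 1 ≤ k) :
    #Sys ≤ 2 * k := by
  by_contra! hbig
  have hSys : 1 < #Sys := by omega
  have hdouble : ∑ x ∈ X, #(Sys.filter fun P => #(classOf P x) = 3) = 3 * #Sys := by
    refine (sum_card_bipartiteAbove_eq_sum_card_bipartiteBelow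
      (r := fun x P => #(classOf P x) = 3)).trans ?_
    refine (sum_congr rfl fun P hP => hS.card_filter_card_classOf_eq_three hX hSys hP).trans ?_
    rw [sum_const, smul_eq_mul, mul_comm]
  have hsum := sum_le_sum fun x hx => hS.card_add_four_le_card_filter_classOf hX hk hbig hx
  simp only [sum_add_distrib, hdouble, sum_const, hX, smul_eq_mul] at hsum
  nlinarith

end IsSpernerPartitionSystem

theorem SP_two_k_add_one_upper (k : ℕ) (hk : 1 ≤ k) :
    SP (2 * k + 1) k ≤ 2 * k := by
  refine csSup_le' ?_
  rintro _ ⟨Sys, hSys, rfl⟩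
  exact hSys.card_le (by simp) hk
end

section
/- For every integer k ≥ 1, SP(2k+1, k) ≥ 2k - 1; that is, there exists a Sperner k-partition system on a (2k+1)-element set with at least 2k-1 partitions. -/
open Finset

/-!
Take the points to be `ZMod (2k-1)` together with two extra points. For each `i`, the `i`-th
partition pairs every `a ≠ i` with its mirror image `2i - a` and puts `i` in one class with the
extra points, which gives `1 + (2k - 2) / 2 = k` classes. Since `2` is invertible modulo
`2k - 1`, a pair `{a, 2i - a}` determines `i` as half its sum, so different partitions share no
pair; nor can the pair lie in the class of `i'` and the extra points, as that forces
`a = 2i - a`. Finally the class of `i` and the extra points contains an extra point, so it lies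
in no pair, and it lies in the corresponding class of `i'` only if `i = i'`.
-/

section Partition

variable {α β : Type*} [DecidableEq α] [DecidableEq β]

lemma IsPartitionInto.map (f : α ↪ β) {X : Finset α} {k : ℕ} {P : Finset (Finset α)}
    (hP : IsPartitionInto X k P) :
    IsPartitionInto (X.map f) k (P.map (mapEmbedding f).toEmbedding) := by
  obtain ⟨hcard, hne, hsub, hcover⟩ := hP
  refine ⟨by rw [card_map, hcard], ?_, ?_, ?_⟩
  · rw [forall_mem_map]
    exact fun A hA => (hne A hA).map
  · rw [forall_mem_map]
    exact fun A hA => map_subset_map.2 (hsub A hA)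
  · rw [forall_mem_map]
    intro x hx
    obtain ⟨A, ⟨hA, hxA⟩, huniq⟩ := hcover x hx
    refine ⟨A.map f, ⟨mem_map_of_mem _ hA, mem_map_of_mem _ hxA⟩, ?_⟩
    rintro _ ⟨hB, hxB⟩
    obtain ⟨B, hBP, rfl⟩ := mem_map.1 hB
    simp only [RelEmbedding.coe_toEmbedding, mapEmbedding_apply, mem_map' f] at hxB ⊢
    rw [huniq B ⟨hBP, hxB⟩]

lemma IsSpernerPartitionSystem.map (f : α ↪ β) {X : Finset α} {k : ℕ}
    {Sys : Finset (Finset (Finset α))} (hSys : IsSpernerPartitionSystem X k Sys) :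
    IsSpernerPartitionSystem (X.map f) k
      (Sys.map (mapEmbedding (mapEmbedding f).toEmbedding).toEmbedding) := by
  obtain ⟨hpart, hsperner⟩ := hSys
  refine ⟨?_, ?_⟩
  · rw [forall_mem_map]
    exact fun P hP => (hpart P hP).map f
  · simp only [forall_mem_map, RelEmbedding.coe_toEmbedding, mapEmbedding_apply, ne_eq,
      map_inj, map_subset_map]
    exact hsperner

lemma IsPartitionInto.sum_card_eq {X : Finset α} {k : ℕ} {P : Finset (Finset α)}
    (hP : IsPartitionInto X k P) : ∑ A ∈ P, A.card = X.card := by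
  obtain ⟨-, -, hsub, hcover⟩ := hP
  have hdisj : (P : Set (Finset α)).PairwiseDisjoint id := by
    intro A hA B hB hAB
    refine disjoint_left.2 fun x hxA hxB => hAB ?_
    exact (hcover x (hsub A hA hxA)).unique ⟨hA, hxA⟩ ⟨hB, hxB⟩
  have hunion : P.biUnion id = X := by
    refine Subset.antisymm (biUnion_subset.2 hsub) fun x hx => ?_
    obtain ⟨A, ⟨hA, hxA⟩, -⟩ := hcover x hx
    exact mem_biUnion.2 ⟨A, hA, hxA⟩
  rw [← hunion, card_biUnion hdisj]
  rfl

lemma isPartitionInto_image_univ [Fintype α] (f : α → Finset α) (hself : ∀ x, x ∈ f x)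
    (hclass : ∀ x y, y ∈ f x → f y = f x) :
    IsPartitionInto univ (univ.image f).card (univ.image f) := by
  refine ⟨rfl, ?_, fun A _ => subset_univ A,
    fun x _ => ⟨f x, ⟨mem_image_of_mem f (mem_univ x), hself x⟩, ?_⟩⟩
  · simp only [mem_image, mem_univ, true_and, forall_exists_index, forall_apply_eq_imp_iff]
    exact fun x => ⟨x, hself x⟩
  · rintro _ ⟨hA, hxA⟩
    obtain ⟨y, -, rfl⟩ := mem_image.1 hA
    exact (hclass y x hxA).symm

end Partition

lemma le_SP {n k : ℕ} {Sys : Finset (Finset (Finset (Fin n)))}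
    (hSys : IsSpernerPartitionSystem univ k Sys) : Sys.card ≤ SP n k :=
  le_csSup ⟨Fintype.card (Finset (Finset (Fin n))), by
    rintro m ⟨S, -, rfl⟩; exact card_le_univ S⟩ ⟨Sys, hSys, rfl⟩

lemma le_SP_of_card_eq {α : Type*} [Fintype α] [DecidableEq α] {n k : ℕ}
    (hα : Fintype.card α = n) {Sys : Finset (Finset (Finset α))}
    (hSys : IsSpernerPartitionSystem univ k Sys) : Sys.card ≤ SP n k := by
  let e := Fintype.equivFinOfCardEq hα
  have hSys' := hSys.map e.toEmbedding
  rw [map_univ_equiv] at hSys'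
  exact (card_map _).symm.trans_le (le_SP hSys')

lemma add_self_injective_of_odd_card {G : Type*} [AddCommGroup G] (hG : Odd (Nat.card G)) :
    Function.Injective (fun a : G => a + a) := by
  simpa only [two_nsmul] using
    (Nat.Coprime.nsmul_right_bijective hG.coprime_two_right).injective

lemma add_eq_add_of_pair_subset {G : Type*} [AddCommMagma G] [DecidableEq G] {a a' b b' : G}
    (hne : a ≠ a') (hs : ({a, a'} : Finset G) ⊆ {b, b'}) : a + a' = b + b' := by
  simp only [insert_subset_iff, mem_insert, mem_singleton, singleton_subset_iff] at hs
  obtain ⟨rfl | rfl, rfl | rfl⟩ := hs <;>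
    first | exact absurd rfl hne | rfl | exact add_comm _ _

lemma ne_add_sub_of_ne {G : Type*} [AddCommGroup G] (hG : Function.Injective (fun a : G => a + a))
    {i a : G} (ha : a ≠ i) : a ≠ i + i - a :=
  fun h => ha (hG (eq_sub_iff_add_eq.1 h))

section Reflection

variable {G β : Type*} [DecidableEq G] [Fintype β] [DecidableEq β]

def fixedClass (i : G) : Finset (G ⊕ β) := insert (.inl i) (univ.map .inr)

@[simp]
lemma inl_mem_fixedClass {i a : G} : (.inl a : G ⊕ β) ∈ fixedClass i ↔ a = i := by
  simp [fixedClass]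

@[simp]
lemma inr_mem_fixedClass (i : G) (b : β) : (.inr b : G ⊕ β) ∈ fixedClass i := by
  simp [fixedClass]

lemma card_fixedClass (i : G) : (fixedClass i : Finset (G ⊕ β)).card = Fintype.card β + 1 := by
  rw [fixedClass, card_insert_of_notMem (by simp), card_map, card_univ]

variable [AddCommGroup G]

def reflectionClass (i : G) : G ⊕ β → Finset (G ⊕ β)
  | .inl a => if a = i then fixedClass i else {.inl a, .inl (i + i - a)}
  | .inr _ => fixedClass i

@[simp]
lemma reflectionClass_inl_self (i : G) : reflectionClass i (.inl i : G ⊕ β) = fixedClass i :=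
  if_pos rfl

lemma reflectionClass_eq_fixedClass_or_pair (i : G) (x : G ⊕ β) :
    reflectionClass i x = fixedClass i ∨
      ∃ a ≠ i, reflectionClass i x = {.inl a, .inl (i + i - a)} := by
  rcases x with a | b
  · by_cases ha : a = i
    · simp [reflectionClass, ha]
    · simp only [reflectionClass, if_neg ha]
      exact Or.inr ⟨a, ha, rfl⟩
  · simp [reflectionClass]

lemma mem_reflectionClass_self (i : G) (x : G ⊕ β) : x ∈ reflectionClass i x := by
  rcases x with a | b
  · by_cases ha : a = i <;> simp [reflectionClass, ha]
  · simp [reflectionClass]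

lemma reflectionClass_of_mem_fixedClass {i : G} {x : G ⊕ β} (hx : x ∈ fixedClass i) :
    reflectionClass i x = fixedClass i := by
  rcases x with a | b
  · simp [reflectionClass, inl_mem_fixedClass.1 hx]
  · rfl

lemma reflectionClass_eq_of_mem {i : G} {x y : G ⊕ β} (h : y ∈ reflectionClass i x) :
    reflectionClass i y = reflectionClass i x := by
  rcases x with a | b
  · by_cases ha : a = i
    · simp only [reflectionClass, if_pos ha] at h ⊢
      exact reflectionClass_of_mem_fixedClass h
    · simp only [reflectionClass, if_neg ha, mem_insert, mem_singleton] at h ⊢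
      rcases h with rfl | rfl
      · simp [ha]
      · have hmirror : i + i - a ≠ i :=
          fun h => ha (add_left_cancel (sub_eq_iff_eq_add.1 h)).symm
        simp only [if_neg hmirror, sub_sub_cancel, pair_comm]
  · exact reflectionClass_of_mem_fixedClass h

lemma not_reflectionClass_subset [Nonempty β] (hG : Function.Injective (fun a : G => a + a))
    {i i' : G} (hii' : i ≠ i') (x y : G ⊕ β) :
    ¬ reflectionClass i x ⊆ reflectionClass i' y := by
  intro hsub
  obtain b : β := Classical.arbitrary β
  rcases reflectionClass_eq_fixedClass_or_pair i x with hx | ⟨a, ha, hx⟩ <;>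
    rcases reflectionClass_eq_fixedClass_or_pair i' y with hy | ⟨c, -, hy⟩ <;>
    rw [hx, hy] at hsub
  · exact hii' (inl_mem_fixedClass.1 (hsub (mem_insert_self _ _)))
  · simpa using hsub (inr_mem_fixedClass i b)
  · simp only [insert_subset_iff, singleton_subset_iff, inl_mem_fixedClass] at hsub
    exact ne_add_sub_of_ne hG ha (hsub.1.trans hsub.2.symm)
  · have hpair : ({a, i + i - a} : Finset G) ⊆ {c, i' + i' - c} := by
      simpa [insert_subset_iff] using hsub
    refine hii' (hG ?_)
    simpa using add_eq_add_of_pair_subset (ne_add_sub_of_ne hG ha) hpair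

variable [Fintype G]

def reflectionPartition (i : G) : Finset (Finset (G ⊕ β)) :=
  univ.image (reflectionClass i)

lemma fixedClass_mem_reflectionPartition (i : G) :
    fixedClass i ∈ reflectionPartition (β := β) i :=
  mem_image.2 ⟨.inl i, mem_univ _, reflectionClass_inl_self i⟩

lemma isPartitionInto_reflectionPartition (i : G) :
    IsPartitionInto univ (reflectionPartition (β := β) i).card
      (reflectionPartition (β := β) i) :=
  isPartitionInto_image_univ _ (mem_reflectionClass_self i) fun _ _ => reflectionClass_eq_of_mem

lemma two_mul_card_reflectionPartition (hG : Function.Injective (fun a : G => a + a)) (i : G) :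
    2 * (reflectionPartition (β := β) i).card = Fintype.card G + 1 := by
  set P := reflectionPartition (β := β) i
  have hfixed : fixedClass i ∈ P := fixedClass_mem_reflectionPartition i
  have hpairs : ∀ A ∈ P.erase (fixedClass i), A.card = 2 := by
    intro A hA
    obtain ⟨hA, x, -, rfl⟩ := mem_erase.1 hA |>.imp_right mem_image.1
    obtain hx | ⟨a, ha, hx⟩ := reflectionClass_eq_fixedClass_or_pair i x
    · exact absurd hx hA
    · rw [hx, card_pair (by simpa using ne_add_sub_of_ne hG ha)]
  have hsum := (isPartitionInto_reflectionPartition (β := β) i).sum_card_eq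
  rw [← add_sum_erase _ _ hfixed, sum_const_nat hpairs, card_erase_of_mem hfixed,
    card_fixedClass, card_univ, Fintype.card_sum] at hsum
  have hpos := card_pos.2 ⟨_, hfixed⟩
  omega

variable (G β) in
def reflectionSystem : Finset (Finset (Finset (G ⊕ β))) := univ.image reflectionPartition

lemma isSpernerPartitionSystem_reflectionSystem [Nonempty β] {k : ℕ}
    (hk : Fintype.card G + 1 = 2 * k) :
    IsSpernerPartitionSystem univ k (reflectionSystem G β) := by
  have hG : Function.Injective (fun a : G => a + a) :=
    add_self_injective_of_odd_card ⟨k - 1, by rw [Nat.card_eq_fintype_card]; omega⟩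
  simp only [IsSpernerPartitionSystem, reflectionSystem, mem_image, mem_univ, true_and,
    forall_exists_index, forall_apply_eq_imp_iff]
  refine ⟨fun i => ?_, fun i i' hii' => ?_⟩
  · have hcard := two_mul_card_reflectionPartition (β := β) hG i
    simpa [show (reflectionPartition i).card = k by omega] using
      isPartitionInto_reflectionPartition (β := β) i
  · simp only [reflectionPartition, mem_image, mem_univ, true_and, forall_exists_index,
      forall_apply_eq_imp_iff]
    exact not_reflectionClass_subset hG (fun h => hii' (congrArg reflectionPartition h))

lemma card_reflectionSystem [Nonempty β] (hG : Function.Injective (fun a : G => a + a)) :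
    (reflectionSystem G β).card = Fintype.card G := by
  refine (card_image_of_injective _ fun i i' h => ?_).trans card_univ
  by_contra hii'
  have hfixed := fixedClass_mem_reflectionPartition (β := β) i
  rw [h] at hfixed
  obtain ⟨y, -, hy⟩ := mem_image.1 hfixed
  refine not_reflectionClass_subset hG hii' (.inl i) y ?_
  rw [hy, reflectionClass_inl_self]

end Reflection

theorem SP_two_k_add_one_lower (k : ℕ) (hk : 1 ≤ k) :
    2 * k - 1 ≤ SP (2 * k + 1) k := by
  have : NeZero (2 * k - 1) := ⟨by omega⟩
  have hodd : Odd (Nat.card (ZMod (2 * k - 1))) := ⟨k - 1, by rw [Nat.card_zmod]; omega⟩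
  calc 2 * k - 1 = (reflectionSystem (ZMod (2 * k - 1)) (Fin 2)).card := by
        rw [card_reflectionSystem (add_self_injective_of_odd_card hodd), ZMod.card]
    _ ≤ SP (2 * k + 1) k :=
        le_SP_of_card_eq (by simp; omega)
          (isSpernerPartitionSystem_reflectionSystem (by rw [ZMod.card]; omega))
end

section
/- For every integer k > 3, SP(3k-1, k) ≥ 3k-1; that is, there exists a Sperner k-partition system on a (3k-1)-element set with at least 3k-1 partitions. -/
open Finset

/-!
Work in `ℤ/(3k-1)`, realised as `Fin (3k-1)`, and take all `3k-1` translates of one `k`-partition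
`P`: the pair `{k-1, k}` together with the triples `{i, k + σ i, 2k + i}`, `i < k - 1`, where `σ`
is a bijection from `{0, …, k-2}` onto `{1, …, k-1}`. Two translates `d + P` and `e + P` can only
violate the Sperner condition if some class of `P` contains a nonzero translate of a class of `P`.
Reading the classes as subsets of `{0, …, 3k-2}`, this becomes a finite list of linear conditions
on `σ`, which hold for `σ i ≡ 2i + 2 (mod k)` when `k` is odd and for a variant of doubling when
`k` is even.
-/

open scoped Pointwise
open Fin.NatCast

theorem IsPartitionInto.image {α β : Type*} [DecidableEq α] [DecidableEq β] {X : Finset α}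
    {k : ℕ} {P : Finset (Finset α)} {f : α → β} (hP : IsPartitionInto X k P)
    (hf : Set.InjOn f X) : IsPartitionInto (X.image f) k (P.image (·.image f)) := by
  obtain ⟨hcard, hne, hsub, huniq⟩ := hP
  refine ⟨?_, ?_, ?_, ?_⟩
  · rw [card_image_of_injOn fun A hA B hB h =>
      (image_eq_image_iff_of_injOn hf (hsub A hA) (hsub B hB)).1 h, hcard]
  · simp only [mem_image, forall_exists_index, and_imp, forall_apply_eq_imp_iff₂]
    exact fun A hA => (hne A hA).image f
  · simp only [mem_image, forall_exists_index, and_imp, forall_apply_eq_imp_iff₂]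
    exact fun A hA => image_subset_image (hsub A hA)
  · simp only [mem_image, forall_exists_index, and_imp, forall_apply_eq_imp_iff₂]
    intro x hx
    obtain ⟨A, ⟨hA, hxA⟩, hAuniq⟩ := huniq x hx
    refine ⟨A.image f, ⟨⟨A, hA, rfl⟩, mem_image_of_mem f hxA⟩, ?_⟩
    rintro _ ⟨⟨B, hB, rfl⟩, hfxB⟩
    obtain ⟨y, hyB, hyx⟩ := mem_image.1 hfxB
    rw [hf (hsub B hB hyB) hx hyx] at hyB
    rw [hAuniq B ⟨hB, hyB⟩]

section Translates

variable {G : Type*} [AddCommGroup G] [DecidableEq G] {k : ℕ} {P : Finset (Finset G)}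

def IsTranslationRigid (P : Finset (Finset G)) : Prop :=
  ∀ A ∈ P, ∀ B ∈ P, ∀ t : G, t +ᵥ A ⊆ B → t = 0

theorem IsTranslationRigid.eq_of_vadd_subset_vadd (hP : IsTranslationRigid P)
    {A B : Finset G} (hA : A ∈ P) (hB : B ∈ P) {d e : G} (h : d +ᵥ A ⊆ e +ᵥ B) : d = e := by
  have h' := (vadd_finset_subset_vadd_finset_iff (a := -e)).2 h
  rw [vadd_vadd, neg_vadd_vadd] at h'
  exact (neg_add_eq_zero.1 (hP A hA B hB _ h')).symm

variable [Fintype G]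

theorem IsPartitionInto.vadd (hP : IsPartitionInto univ k P) (d : G) :
    IsPartitionInto univ k (d +ᵥ P) := by
  have h := hP.image (f := (d +ᵥ ·)) (AddAction.injective d).injOn
  rwa [image_univ_of_surjective (AddAction.surjective d)] at h

def translates (P : Finset (Finset G)) : Finset (Finset (Finset G)) :=
  univ.image fun d : G => d +ᵥ P

theorem isSpernerPartitionSystem_translates (hP : IsPartitionInto univ k P)
    (hR : IsTranslationRigid P) : IsSpernerPartitionSystem univ k (translates P) := by
  simp only [IsSpernerPartitionSystem, translates, mem_image, mem_univ, true_and,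
    forall_exists_index, forall_apply_eq_imp_iff]
  refine ⟨hP.vadd, fun d e hde _ hA _ hB hAB => hde ?_⟩
  obtain ⟨A, hA₀, rfl⟩ := mem_vadd_finset.1 hA
  obtain ⟨B, hB₀, rfl⟩ := mem_vadd_finset.1 hB
  rw [hR.eq_of_vadd_subset_vadd hA₀ hB₀ hAB]

theorem card_translates (hne : P.Nonempty) (hR : IsTranslationRigid P) :
    (translates P).card = Fintype.card G := by
  refine card_image_of_injective _ fun d e hde => ?_
  obtain ⟨A, hA⟩ := hne
  obtain ⟨B, hB, hAB⟩ := mem_vadd_finset.1 (hde ▸ vadd_mem_vadd_finset hA : d +ᵥ A ∈ e +ᵥ P)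
  exact hR.eq_of_vadd_subset_vadd hA hB hAB.symm.subset

end Translates

theorem card_le_SP {n k : ℕ} {Sys : Finset (Finset (Finset (Fin n)))}
    (h : IsSpernerPartitionSystem univ k Sys) : Sys.card ≤ SP n k :=
  le_csSup ⟨Fintype.card (Finset (Finset (Fin n))), by
    rintro _ ⟨S, -, rfl⟩
    exact card_le_univ S⟩ ⟨Sys, h, rfl⟩

theorem Fin.natCast_add_eq_natCast_iff {n x y : ℕ} [NeZero n] (t : Fin n) (hx : x < n)
    (hy : y < n) : (x : Fin n) + t = y ↔ x + t.val = y ∨ x + t.val = y + n := by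
  rw [Fin.ext_iff, Fin.val_add, Fin.val_natCast, Fin.val_natCast, Nat.mod_eq_of_lt hx,
    Nat.mod_eq_of_lt hy]
  have ht := t.isLt
  rcases lt_or_ge (x + t.val) n with h | h
  · rw [Nat.mod_eq_of_lt h]
    omega
  · rw [Nat.mod_eq_sub_mod h, Nat.mod_eq_of_lt (by omega)]
    omega

theorem IsPartitionInto.image_natCast {n k : ℕ} [NeZero n] {C : Finset (Finset ℕ)}
    (hC : IsPartitionInto (range n) k C) :
    IsPartitionInto univ k (C.image (·.image (Nat.cast : ℕ → Fin n))) := by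
  have h := hC.image (f := (Nat.cast : ℕ → Fin n)) fun x hx y hy hxy => by
    rw [Fin.ext_iff, Fin.val_natCast, Fin.val_natCast, Nat.mod_eq_of_lt (mem_range.1 hx),
      Nat.mod_eq_of_lt (mem_range.1 hy)] at hxy
    exact hxy
  rwa [eq_univ_of_forall fun x : Fin n => mem_image.2 ⟨x.val, mem_range.2 x.isLt,
    Fin.cast_val_eq_self x⟩] at h

theorem isTranslationRigid_image_natCast {n : ℕ} [NeZero n] {C : Finset (Finset ℕ)}
    (hC : ∀ A ∈ C, A ⊆ range n)
    (h : ∀ A ∈ C, ∀ B ∈ C, ∀ s < n, (∀ x ∈ A, ∃ y ∈ B, x + s = y ∨ x + s = y + n) → s = 0) :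
    IsTranslationRigid (C.image (·.image (Nat.cast : ℕ → Fin n))) := by
  simp only [IsTranslationRigid, forall_mem_image]
  intro A hA B hB t hAB
  refine Fin.ext (h A hA B hB t.val t.isLt fun x hx => ?_)
  obtain ⟨y, hy, hyx⟩ := mem_image.1 (hAB (vadd_mem_vadd_finset (mem_image_of_mem _ hx)))
  rw [vadd_eq_add, add_comm, eq_comm, Fin.natCast_add_eq_natCast_iff t
    (mem_range.1 (hC A hA hx)) (mem_range.1 (hC B hB hy))] at hyx
  exact ⟨y, hy, hyx⟩

/-- In `ℤ/(3k-1)` the triple `{i, k + σ i, 2k + i}` has cyclic gaps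
`(k + σ i - i, k - σ i + i, k - 1)`. The last three fields say that no two triples have gap
sequences that are rotations of each other, and that no gap is `1`, the gap of the pair
`{k-1, k}`. -/
structure IsTriplePerm (k : ℕ) (σ : ℕ → ℕ) : Prop where
  bijOn : Set.BijOn σ (Set.Iio (k - 1)) (Set.Ioo 0 k)
  add_injOn : ∀ i < k - 1, ∀ j < k - 1, σ i + j = σ j + i → i = j
  not_succ_and_pred : ∀ i < k - 1, ∀ j < k - 1, ¬ (σ i = i + 1 ∧ σ j + 1 = j)
  zero_ne : σ 0 ≠ k - 1

theorem IsTriplePerm.pos_lt {k : ℕ} {σ : ℕ → ℕ} (hσ : IsTriplePerm k σ) {i : ℕ}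
    (hi : i < k - 1) : 0 < σ i ∧ σ i < k :=
  hσ.bijOn.mapsTo hi

def pairClass (k : ℕ) : Finset ℕ := {k - 1, k}

def tripleClass (k : ℕ) (σ : ℕ → ℕ) (i : ℕ) : Finset ℕ := {i, k + σ i, 2 * k + i}

def baseClasses (k : ℕ) (σ : ℕ → ℕ) : Finset (Finset ℕ) :=
  insert (pairClass k) ((range (k - 1)).image (tripleClass k σ))

section BaseClasses

variable {n k : ℕ} {σ : ℕ → ℕ} {A B : Finset ℕ}

theorem mem_baseClasses :
    A ∈ baseClasses k σ ↔ A = pairClass k ∨ ∃ i < k - 1, A = tripleClass k σ i := by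
  simp only [baseClasses, mem_insert, mem_image, mem_range, eq_comm (b := A)]

theorem card_baseClasses (hk : k ≠ 0) : (baseClasses k σ).card = k := by
  rw [baseClasses, card_insert_of_notMem, card_image_of_injOn, card_range]
  · omega
  · intro i hi j hj hij
    have : i ∈ tripleClass k σ j := hij ▸ by simp [tripleClass]
    simp only [tripleClass, mem_insert, mem_singleton] at this
    simp only [coe_range, Set.mem_Iio] at hi hj
    omega
  · simp only [mem_image, mem_range, not_exists, not_and]
    intro i hi hip
    have : i ∈ pairClass k := hip ▸ by simp [tripleClass]
    simp only [pairClass, mem_insert, mem_singleton] at this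
    omega

theorem exists_mem_baseClasses (hσ : IsTriplePerm k σ) (hn : n + 1 = 3 * k) {x : ℕ}
    (hx : x < n) : ∃ A ∈ baseClasses k σ, x ∈ A := by
  suffices x ∈ pairClass k ∨ ∃ i < k - 1, x ∈ tripleClass k σ i by
    rcases this with hx | ⟨i, hi, hx⟩
    · exact ⟨_, mem_insert_self _ _, hx⟩
    · exact ⟨_, mem_insert_of_mem (mem_image_of_mem _ (mem_range.2 hi)), hx⟩
  simp only [pairClass, tripleClass, mem_insert, mem_singleton]
  rcases lt_or_ge x (k - 1) with hx₁ | hx₁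
  · exact Or.inr ⟨x, hx₁, by omega⟩
  rcases le_or_gt x k with hx₂ | hx₂
  · exact Or.inl (by omega)
  rcases lt_or_ge x (2 * k) with hx₃ | hx₃
  · obtain ⟨i, hi, hσi⟩ :=
      hσ.bijOn.surjOn (Set.mem_Ioo.2 ⟨by omega, by omega⟩ : x - k ∈ Set.Ioo 0 k)
    exact Or.inr ⟨i, hi, by omega⟩
  · exact Or.inr ⟨x - 2 * k, by omega, by omega⟩

theorem eq_of_mem_baseClasses (hσ : IsTriplePerm k σ) (hA : A ∈ baseClasses k σ)
    (hB : B ∈ baseClasses k σ) {x : ℕ} (hxA : x ∈ A) (hxB : x ∈ B) : A = B := by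
  rw [mem_baseClasses] at hA hB
  rcases hA with rfl | ⟨i, hi, rfl⟩ <;> rcases hB with rfl | ⟨j, hj, rfl⟩ <;>
    simp only [pairClass, tripleClass, mem_insert, mem_singleton] at hxA hxB
  · rfl
  · have := hσ.pos_lt hj
    omega
  · have := hσ.pos_lt hi
    omega
  · have := hσ.pos_lt hi
    have := hσ.pos_lt hj
    have : σ i = σ j → i = j := fun h => hσ.bijOn.injOn hi hj h
    obtain rfl : i = j := by omega
    rfl

theorem isPartitionInto_baseClasses (hσ : IsTriplePerm k σ) (hn : n + 1 = 3 * k) :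
    IsPartitionInto (range n) k (baseClasses k σ) := by
  refine ⟨card_baseClasses (by omega), fun A hA => ?_, fun A hA => ?_, fun x hx => ?_⟩
  · rcases mem_baseClasses.1 hA with rfl | ⟨i, -, rfl⟩ <;> simp [pairClass, tripleClass]
  · intro x hx
    rcases mem_baseClasses.1 hA with rfl | ⟨i, hi, rfl⟩ <;>
      simp only [pairClass, tripleClass, mem_insert, mem_singleton] at hx
    · rw [mem_range]; omega
    · have := hσ.pos_lt hi
      rw [mem_range]; omega
  · obtain ⟨A, hA, hxA⟩ := exists_mem_baseClasses hσ hn (mem_range.1 hx)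
    exact ⟨A, ⟨hA, hxA⟩, fun B ⟨hB, hxB⟩ => eq_of_mem_baseClasses hσ hB hA hxB hxA⟩

theorem baseClasses_shift_rigid (hσ : IsTriplePerm k σ) (hk : 1 < k) (hn : n + 1 = 3 * k)
    (hA : A ∈ baseClasses k σ) (hB : B ∈ baseClasses k σ) {s : ℕ} (hs : s < n)
    (h : ∀ x ∈ A, ∃ y ∈ B, x + s = y ∨ x + s = y + n) : s = 0 := by
  rw [mem_baseClasses] at hA hB
  rcases hA with rfl | ⟨i, hi, rfl⟩ <;> rcases hB with rfl | ⟨j, hj, rfl⟩ <;>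
    simp only [pairClass, tripleClass, mem_insert, mem_singleton, forall_eq_or_imp,
      forall_eq, exists_eq_or_imp, exists_eq_left] at h
  · omega
  · have := hσ.pos_lt hj
    have : j = 0 → σ j ≠ k - 1 := by rintro rfl; exact hσ.zero_ne
    omega
  · have := hσ.pos_lt hi
    omega
  · have := hσ.pos_lt hi
    have := hσ.pos_lt hj
    have := hσ.add_injOn i hi j hj
    have := hσ.not_succ_and_pred i hi j hj
    have := hσ.not_succ_and_pred j hj i hi
    omega

end BaseClasses

def doublingPerm (k i : ℕ) : ℕ :=
  if k % 2 = 1 then (if 2 * i + 2 < k then 2 * i + 2 else 2 * i + 2 - k)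
  else if i = 0 then k - 2 else if 2 * i ≤ k then 2 * i - 1 else 2 * i - k

theorem doublingPerm_surjOn {k : ℕ} (hk : 3 < k) :
    Set.SurjOn (doublingPerm k) (Set.Iio (k - 1)) (Set.Ioo 0 k) := by
  rintro w ⟨hw₀, hwk⟩
  obtain ⟨i, hi, rfl⟩ : ∃ i < k - 1, doublingPerm k i = w := by
    rcases Nat.mod_two_eq_zero_or_one k with hk₂ | hk₂ <;>
      rcases Nat.mod_two_eq_zero_or_one w with hw₂ | hw₂
    · by_cases hw : w = k - 2
      · exact ⟨0, by omega, by unfold doublingPerm; split_ifs <;> omega⟩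
      · exact ⟨(w + k) / 2, by omega, by unfold doublingPerm; split_ifs <;> omega⟩
    · exact ⟨(w + 1) / 2, by omega, by unfold doublingPerm; split_ifs <;> omega⟩
    · exact ⟨(w - 2) / 2, by omega, by unfold doublingPerm; split_ifs <;> omega⟩
    · exact ⟨(w + k) / 2 - 1, by omega, by unfold doublingPerm; split_ifs <;> omega⟩
  exact Set.mem_image_of_mem _ hi

theorem isTriplePerm_doublingPerm {k : ℕ} (hk : 3 < k) : IsTriplePerm k (doublingPerm k) where
  bijOn := by
    refine ⟨fun i hi => ?_, fun i hi j hj hij => ?_, doublingPerm_surjOn hk⟩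
    · rw [Set.mem_Iio] at hi
      rw [Set.mem_Ioo]
      unfold doublingPerm
      split_ifs <;> omega
    · rw [Set.mem_Iio] at hi hj
      unfold doublingPerm at hij
      split_ifs at hij <;> omega
  add_injOn i hi j hj h := by unfold doublingPerm at h; split_ifs at h <;> omega
  not_succ_and_pred i hi j hj := by unfold doublingPerm; split_ifs <;> omega
  zero_ne := by unfold doublingPerm; split_ifs <;> omega

theorem SP_three_k_sub_one_lower (k : ℕ) (hk : 3 < k) :
    3 * k - 1 ≤ SP (3 * k - 1) k := by
  have hn : 3 * k - 1 + 1 = 3 * k := by omega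
  have : NeZero (3 * k - 1) := ⟨by omega⟩
  have hσ := isTriplePerm_doublingPerm hk
  have hC := isPartitionInto_baseClasses hσ hn
  set P := (baseClasses k (doublingPerm k)).image (·.image (Nat.cast : ℕ → Fin (3 * k - 1)))
  have hP : IsPartitionInto univ k P := hC.image_natCast
  have hR : IsTranslationRigid P := isTranslationRigid_image_natCast hC.2.2.1
    fun _ hA _ hB _ hs h => baseClasses_shift_rigid hσ (by omega) hn hA hB hs h
  have hne : P.Nonempty := card_pos.1 (by rw [hP.1]; omega)
  calc 3 * k - 1 = (translates P).card := by rw [card_translates hne hR, Fintype.card_fin]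
    _ ≤ SP (3 * k - 1) k := card_le_SP (isSpernerPartitionSystem_translates hP hR)
end
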